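/- Let G be a commutative group (written multiplicatively), g : G, and ι a finite index set of attributes. Suppose the system secret shares a, s : ι → ℤ satisfy a i + s i = K for every i (master-secret splitting), and the receiver's key shares a_U, s_U : ι → ℤ satisfy a_U i + s_U i = K for every i. Let σ : ι ≃ ι be the shuffle permutation, r, ω : ℤ the encryption randomness and time key, p : ι → G the message tuples, I_r a finset of receiver attribute indices, and Î_r := image of I_r under σ⁻¹. Set A := g^r, D := g^(r·ω), B'ᵢ := p(σ i) * g^(a(σ i)·r) * g^(s i·r), AK := (∑_{i ∈ I_r} a_U i) + ω, RK := ∑_{i ∈ I_r} s_U i. Then the ProxyDecrypt1 output satisfies D * (∏_{i ∈ Î_r} B'ᵢ) * A^(−(AK + RK)) = (∏_{j ∈ I_r} p j) * g^(r·((∑_{i ∈ Î_r} s i) − (∑_{j ∈ I_r} s j))). -/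

import Mathlib

/-!
Since `a i + s i` and `aU i + sU i` both equal `K`, summing over `I_r` gives
`∑ a + ∑ s = ∑ aU + ∑ sU`. Extracting along `σ⁻¹` undoes the shuffle, so the extracted product
is `(∏ p) · g^(r ∑ a) · g^(r ∑_{Î_r} s)`; multiplying by `D = g^(rω)` and dividing by
`A^(AK + RK) = g^(r (∑ aU + ω + ∑ sU))` cancels `ω` and trades `∑ aU + ∑ sU` for `∑ a + ∑ s`,
leaving the blinding factor `g^(r (∑_{Î_r} s - ∑_{I_r} s))`.
-/

open Finset

theorem Finset.prod_zpow_eq_zpow_sum {ι G : Type*} [CommGroup G] (I : Finset ι) (f : ι → ℤ)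
    (g : G) : ∏ i ∈ I, g ^ f i = g ^ ∑ i ∈ I, f i := by
  induction I using Finset.cons_induction with
  | empty => simp
  | cons c t hc ih => rw [prod_cons, sum_cons, ih, zpow_add]

theorem Finset.sum_add_sum_eq_of_add_eq {ι M : Type*} [AddCommMonoid M] (I : Finset ι)
    {a s a' s' : ι → M} (h : ∀ i, a i + s i = a' i + s' i) :
    ∑ i ∈ I, a i + ∑ i ∈ I, s i = ∑ i ∈ I, a' i + ∑ i ∈ I, s' i := by
  simp only [← sum_add_distrib, h]

@[to_additive]
theorem Finset.prod_image_equiv_symm {ι κ M : Type*} [CommMonoid M] [DecidableEq ι]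
    (σ : ι ≃ κ) (I : Finset κ) (f : κ → M) :
    ∏ i ∈ I.image σ.symm, f (σ i) = ∏ j ∈ I, f j := by
  rw [prod_image σ.symm.injective.injOn]
  simp only [Equiv.apply_symm_apply]

theorem eabehp_proxyDecrypt1_correctness_general
    {G : Type*} [CommGroup G] (g : G)
    {ι : Type*} [DecidableEq ι]
    (a s aU sU : ι → ℤ) (K : ℤ)
    (hK : ∀ i, a i + s i = K) (hKU : ∀ i, aU i + sU i = K)
    (σ : Equiv.Perm ι) (r ω : ℤ) (p : ι → G) (Ir : Finset ι)
    (Ihat : Finset ι) (hIhat : Ihat = Ir.image σ.symm)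
    (A D : G) (hA : A = g ^ r) (hD : D = g ^ (r * ω))
    (B' : ι → G)
    (hB' : ∀ i, B' i = p (σ i) * g ^ (a (σ i) * r) * g ^ (s i * r))
    (AK RK : ℤ)
    (hAK : AK = (∑ i ∈ Ir, aU i) + ω) (hRK : RK = ∑ i ∈ Ir, sU i) :
    D * (∏ i ∈ Ihat, B' i) * A ^ (-(AK + RK)) =
      (∏ j ∈ Ir, p j) *
        g ^ (r * ((∑ i ∈ Ihat, s i) - (∑ j ∈ Ir, s j))) := by
  have hsplit : ∑ j ∈ Ir, a j + ∑ j ∈ Ir, s j = ∑ j ∈ Ir, aU j + ∑ j ∈ Ir, sU j :=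
    Ir.sum_add_sum_eq_of_add_eq fun i => (hK i).trans (hKU i).symm
  have hextract : ∏ i ∈ Ihat, B' i =
      (∏ j ∈ Ir, p j) * g ^ ((∑ j ∈ Ir, a j) * r) * g ^ ((∑ i ∈ Ihat, s i) * r) := by
    simp only [hB', prod_mul_distrib, prod_zpow_eq_zpow_sum, ← sum_mul]
    rw [hIhat, prod_image_equiv_symm σ Ir p, sum_image_equiv_symm σ Ir a]
  rw [hextract, hD, hA, hAK, hRK, ← zpow_mul]
  calc g ^ (r * ω) * ((∏ j ∈ Ir, p j) * g ^ ((∑ j ∈ Ir, a j) * r) * g ^ ((∑ i ∈ Ihat, s i) * r)) *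
        g ^ (r * -((∑ i ∈ Ir, aU i) + ω + ∑ i ∈ Ir, sU i))
      = (∏ j ∈ Ir, p j) * g ^ (r * ω + (∑ j ∈ Ir, a j) * r + (∑ i ∈ Ihat, s i) * r +
          r * -((∑ i ∈ Ir, aU i) + ω + ∑ i ∈ Ir, sU i)) := by
        simp only [zpow_add]; ac_rfl
    _ = _ := by congr 2; linear_combination r * hsplit

/-- Correctness identity of the `ProxyDecrypt1` algorithm of the EABEHP scheme:
given master-secret splitting `a i + s i = K` and receiver key splitting
`a_U i + s_U i = K`, the partial decryption
`D * (∏ i in Î_r, B' i) * A ^ (-(AK + RK))` equals the product of the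
receiver's message tuples blinded by
`g ^ (r * ((∑ i in Î_r, s i) - (∑ j in I_r, s j)))`. -/
theorem eabehp_proxyDecrypt1_correctness
    {G : Type*} [CommGroup G] (g : G)
    {ι : Type*} [Fintype ι] [DecidableEq ι]
    (a s aU sU : ι → ℤ) (K : ℤ)
    (hK : ∀ i, a i + s i = K) (hKU : ∀ i, aU i + sU i = K)
    (σ : Equiv.Perm ι) (r ω : ℤ) (p : ι → G) (Ir : Finset ι)
    (Ihat : Finset ι) (hIhat : Ihat = Ir.image σ.symm)
    (A D : G) (hA : A = g ^ r) (hD : D = g ^ (r * ω))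
    (B' : ι → G)
    (hB' : ∀ i, B' i = p (σ i) * g ^ (a (σ i) * r) * g ^ (s i * r))
    (AK RK : ℤ)
    (hAK : AK = (∑ i ∈ Ir, aU i) + ω) (hRK : RK = ∑ i ∈ Ir, sU i) :
    D * (∏ i ∈ Ihat, B' i) * A ^ (-(AK + RK)) =
      (∏ j ∈ Ir, p j) *
        g ^ (r * ((∑ i ∈ Ihat, s i) - (∑ j ∈ Ir, s j))) :=
  eabehp_proxyDecrypt1_correctness_general g a s aU sU K hK hKU σ r ω p Ir Ihat hIhat A D hA hD B'
    hB' AK RK hAK hRK
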